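/- arXiv:2010.11939 — 3 statements merged into one kernel-verified Lean document; each statement's English description precedes it below -/
import Mathlib

section
/- With the construction φ' = (¬A₁ ∧ ⋯ ∧ ¬A_{j+1}) ∨ (A₁ ∧ Shift(φ)) and the weighted language p̃(enc(ψ)·a) = (1/3)^{|enc(ψ)·a|+1} for a satisfying ψ, the local conditional probability p(1 | enc(φ')) is strictly positive if and only if φ is satisfiable, and the local conditional probability p(0 | enc(φ')) equals 1 if and only if φ is unsatisfiable. -/
/-- Boolean formulas over variables `A_0, A_1, …` (0-indexed), with a truth constant. -/
inductive Fm : Type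
  | tru : Fm
  | var : ℕ → Fm
  | not : Fm → Fm
  | and : Fm → Fm → Fm
  | or : Fm → Fm → Fm

/-- Evaluation of a formula under an assignment `σ`. -/
def Fm.eval (σ : ℕ → Bool) : Fm → Bool
  | .tru => true
  | .var i => σ i
  | .not φ => !(φ.eval σ)
  | .and φ ψ => φ.eval σ && ψ.eval σ
  | .or φ ψ => φ.eval σ || ψ.eval σ

/-- `Shift(φ)`: rename each variable `A_i` to `A_{i+1}`. -/
def Fm.shift : Fm → Fm
  | .tru => .tru
  | .var i => .var (i + 1)
  | .not φ => .not φ.shift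
  | .and φ ψ => .and φ.shift ψ.shift
  | .or φ ψ => .or φ.shift ψ.shift

/-- The conjunction `¬A_0 ∧ ⋯ ∧ ¬A_{n-1}`. -/
def allFalse : ℕ → Fm
  | 0 => .tru
  | n + 1 => .and (allFalse n) (.not (.var n))

/-- `φ` is a formula on the variables `A_0, …, A_{j-1}`: its value depends only on them. -/
def onlyUses (j : ℕ) (φ : Fm) : Prop :=
  ∀ σ σ' : ℕ → Bool, (∀ i < j, σ i = σ' i) → φ.eval σ = φ.eval σ'

/-- An assignment `a ∈ {0,1}^n` satisfies `φ`. -/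
def satN {n : ℕ} (a : Fin n → Bool) (φ : Fm) : Prop :=
  φ.eval (fun i => if h : i < n then a ⟨i, h⟩ else false) = true

instance {n : ℕ} (a : Fin n → Bool) (φ : Fm) : Decidable (satN a φ) :=
  inferInstanceAs (Decidable (_ = true))

open scoped ENNReal

/-- A binary string `a` (read as an assignment of `A_0, A_1, …`, padded with `false`)
satisfies `φ`. -/
def satL (a : List Bool) (φ : Fm) : Prop :=
  φ.eval (fun i => a.getD i false) = true

/-- `φ' = (¬A_0 ∧ ⋯ ∧ ¬A_j) ∨ (A_0 ∧ Shift(φ))`. -/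
def phiP (j : ℕ) (φ : Fm) : Fm :=
  .or (allFalse (j + 1)) (.and (.var 0) φ.shift)

/-!
By prefix-freeness of `enc`, a string of positive weight that extends `enc φ'` is `enc φ' ++ a`
with `a` a satisfying assignment of `φ'` of length `j + 1`. Hence `Z (enc φ')` is a finite sum,
positive because of the witness `0^{j+1}`, and splitting it by the next symbol gives
`Z (enc φ') = Z (enc φ' ++ [false]) + Z (enc φ' ++ [true])`. The second summand is non-zero
exactly when some `true :: b` satisfies `φ'`, i.e. when `b` satisfies `φ`.
-/

theorem Fm.eval_allFalse (σ : ℕ → Bool) :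
    ∀ n, (allFalse n).eval σ = true ↔ ∀ i < n, σ i = false
  | 0 => by simp [allFalse, Fm.eval]
  | n + 1 => by
    simp only [allFalse, Fm.eval, Bool.and_eq_true, Fm.eval_allFalse σ n, Bool.not_eq_true']
    constructor
    · rintro ⟨h, hn⟩ i hi
      rcases Nat.lt_succ_iff_lt_or_eq.1 hi with hi | rfl
      exacts [h i hi, hn]
    · exact fun h => ⟨fun i hi => h i (by omega), h n (by omega)⟩

theorem Fm.eval_shift (φ : Fm) (σ : ℕ → Bool) : φ.shift.eval σ = φ.eval (fun i => σ (i + 1)) := by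
  induction φ <;> simp [Fm.shift, Fm.eval, *]

theorem satL_true_cons_phiP (j : ℕ) (φ : Fm) (b : List Bool) :
    satL (true :: b) (phiP j φ) ↔ satL b φ := by
  have hfalse : (allFalse (j + 1)).eval (fun i => (true :: b).getD i false) = false := by
    rw [← Bool.not_eq_true, Fm.eval_allFalse]
    exact fun h => by simpa using h 0 (Nat.succ_pos j)
  simp only [satL, phiP, Fm.eval, hfalse, Fm.eval_shift, List.getD_cons_zero,
    List.getD_cons_succ, Bool.false_or, Bool.true_and]

theorem satL_replicate_false_phiP (j : ℕ) (φ : Fm) :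
    satL (List.replicate (j + 1) false) (phiP j φ) := by
  have hzero : (allFalse (j + 1)).eval (fun _ => false) = true :=
    (Fm.eval_allFalse _ _).2 fun _ _ => rfl
  simp [satL, phiP, Fm.eval, hzero]

theorem exists_satL_phiP_of_true_prefix_iff (j : ℕ) (φ : Fm) :
    (∃ a, [true] <+: a ∧ a.length = j + 1 ∧ satL a (phiP j φ)) ↔
      ∃ b : List Bool, b.length = j ∧ satL b φ := by
  constructor
  · rintro ⟨_, ⟨b, rfl⟩, hlen, hsat⟩
    exact ⟨b, by simpa using hlen, (satL_true_cons_phiP j φ b).1 hsat⟩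
  · rintro ⟨b, hlen, hsat⟩
    exact ⟨true :: b, ⟨b, rfl⟩, by simp [hlen], (satL_true_cons_phiP j φ b).2 hsat⟩

theorem ENNReal.tsum_ne_top_of_finite_support {α : Type*} {f : α → ℝ≥0∞}
    (hf : (Function.support f).Finite) (htop : ∀ a, f a ≠ ⊤) : ∑' a, f a ≠ ⊤ := by
  rw [tsum_eq_sum (s := hf.toFinset) (by simp)]
  exact ENNReal.sum_ne_top.2 fun a _ => htop a

noncomputable def prefixMass (pt : List Bool → ℝ≥0∞) (y : List Bool) : ℝ≥0∞ :=
  ∑' x : {x // y <+: x}, pt x.1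

theorem prefixMass_eq_zero_iff (pt : List Bool → ℝ≥0∞) (y : List Bool) :
    prefixMass pt y = 0 ↔ ∀ x, y <+: x → pt x = 0 := by
  simp [prefixMass, ENNReal.tsum_eq_zero]

theorem List.prefix_iff_eq_or_prefix_concat {α : Type*} (y x : List α) :
    y <+: x ↔ x = y ∨ ∃ c, y ++ [c] <+: x := by
  constructor
  · rintro ⟨_ | ⟨c, t⟩, rfl⟩
    · simp
    · exact Or.inr ⟨c, t, by simp⟩
  · rintro (rfl | ⟨c, h⟩)
    exacts [List.prefix_refl _, (List.prefix_append _ _).trans h]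

theorem prefixMass_eq_add (pt : List Bool → ℝ≥0∞) (y : List Bool) :
    prefixMass pt y = pt y + prefixMass pt (y ++ [false]) + prefixMass pt (y ++ [true]) := by
  have hsplit : {x | y <+: x} = {y} ∪ ({x | y ++ [false] <+: x} ∪ {x | y ++ [true] <+: x}) := by
    ext x
    simp only [Set.mem_ofPred_eq, Set.mem_union, Set.mem_singleton_iff,
      List.prefix_iff_eq_or_prefix_concat y x, Bool.exists_bool]
  have hft : Disjoint {x | y ++ [false] <+: x} {x | y ++ [true] <+: x} := by
    refine Set.disjoint_left.2 fun x hf ht => ?_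
    rcases List.prefix_or_prefix_of_prefix hf ht with h | h <;> simp at h
  have hy : Disjoint {y} ({x | y ++ [false] <+: x} ∪ {x | y ++ [true] <+: x}) := by
    refine Set.disjoint_singleton_left.2 fun h => ?_
    rcases h with ⟨_, h⟩ | ⟨_, h⟩ <;> simpa using congrArg List.length h
  change ∑' x : ({x | y <+: x} : Set _), pt x = _
  rw [hsplit, ENNReal.summable.tsum_union_disjoint hy ENNReal.summable,
    ENNReal.summable.tsum_union_disjoint hft ENNReal.summable, tsum_singleton, add_assoc]
  rfl

section WeightedLanguage

variable {enc : Fm → List Bool} (hpf : ∀ φ ψ : Fm, enc φ <+: enc ψ → φ = ψ)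
  {nv : Fm → ℕ} {pt : List Bool → ℝ≥0∞}
  (hpt1 : ∀ (ψ : Fm) (a : List Bool), a.length = nv ψ → satL a ψ →
    pt (enc ψ ++ a) = (1 / 3 : ℝ≥0∞) ^ ((enc ψ ++ a).length + 1))
  (hpt0 : ∀ x : List Bool,
    (¬ ∃ (ψ : Fm) (a : List Bool), x = enc ψ ++ a ∧ a.length = nv ψ ∧ satL a ψ) → pt x = 0)
include hpt1 hpt0

theorem pt_ne_top (x : List Bool) : pt x ≠ ⊤ := by
  by_cases h : ∃ ψ a, x = enc ψ ++ a ∧ a.length = nv ψ ∧ satL a ψ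
  · obtain ⟨ψ, a, rfl, hlen, hsat⟩ := h
    rw [hpt1 ψ a hlen hsat]
    exact ENNReal.pow_ne_top (by norm_num)
  · simp [hpt0 x h]

include hpf

theorem pt_enc_append_ne_zero_iff (ψ : Fm) (u : List Bool) :
    pt (enc ψ ++ u) ≠ 0 ↔ u.length = nv ψ ∧ satL u ψ := by
  constructor
  · intro hne
    by_contra! hu
    refine hne (hpt0 _ ?_)
    rintro ⟨ψ', a, heq, hlen, hsat⟩
    have hψ : ψ' = ψ := by
      rcases List.prefix_or_prefix_of_prefix (heq ▸ List.prefix_append _ _)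
        (List.prefix_append (enc ψ') a) with h | h
      exacts [(hpf _ _ h).symm, hpf _ _ h]
    subst hψ
    obtain rfl := List.append_cancel_left heq
    exact hu hlen hsat
  · rintro ⟨hlen, hsat⟩
    rw [hpt1 ψ u hlen hsat]
    exact pow_ne_zero _ (by norm_num)

theorem prefixMass_enc_append_ne_zero_iff (ψ : Fm) (u : List Bool) :
    prefixMass pt (enc ψ ++ u) ≠ 0 ↔ ∃ a, u <+: a ∧ a.length = nv ψ ∧ satL a ψ := by
  rw [Ne, prefixMass_eq_zero_iff]
  push Not
  constructor
  · rintro ⟨_, ⟨t, rfl⟩, hne⟩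
    rw [List.append_assoc] at hne
    exact ⟨u ++ t, List.prefix_append _ _, (pt_enc_append_ne_zero_iff hpf hpt1 hpt0 _ _).1 hne⟩
  · rintro ⟨a, hua, ha⟩
    exact ⟨enc ψ ++ a, (List.prefix_append_right_inj _).2 hua,
      (pt_enc_append_ne_zero_iff hpf hpt1 hpt0 _ _).2 ha⟩

theorem prefixMass_enc_ne_top (ψ : Fm) : prefixMass pt (enc ψ) ≠ ⊤ := by
  refine ENNReal.tsum_ne_top_of_finite_support ?_ fun x => pt_ne_top hpt1 hpt0 x.1
  refine (((List.finite_length_eq Bool (nv ψ)).image (enc ψ ++ ·)).preimage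
    Subtype.val_injective.injOn).subset ?_
  rintro ⟨_, ⟨a, rfl⟩⟩ hne
  exact ⟨a, ((pt_enc_append_ne_zero_iff hpf hpt1 hpt0 ψ a).1 hne).1, rfl⟩

end WeightedLanguage

theorem stmt7_general (enc : Fm → List Bool)
    (hpf : ∀ φ ψ : Fm, enc φ <+: enc ψ → φ = ψ)
    (nv : Fm → ℕ)
    (pt : List Bool → ℝ≥0∞)
    (hpt1 : ∀ (ψ : Fm) (a : List Bool), a.length = nv ψ → satL a ψ →
      pt (enc ψ ++ a) = (1 / 3 : ℝ≥0∞) ^ ((enc ψ ++ a).length + 1))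
    (hpt0 : ∀ x : List Bool,
      (¬ ∃ (ψ : Fm) (a : List Bool), x = enc ψ ++ a ∧ a.length = nv ψ ∧ satL a ψ) →
      pt x = 0)
    (φ : Fm) (j : ℕ) (hj' : nv (phiP j φ) = j + 1)
    (Z : List Bool → ℝ≥0∞)
    (hZ : ∀ y : List Bool, Z y = ∑' x : {x : List Bool // y <+: x}, pt x.1) :
    (0 < Z (enc (phiP j φ) ++ [true]) / Z (enc (phiP j φ)) ↔
        ∃ a : List Bool, a.length = j ∧ satL a φ) ∧
    (Z (enc (phiP j φ) ++ [false]) / Z (enc (phiP j φ)) = 1 ↔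
        ¬ ∃ a : List Bool, a.length = j ∧ satL a φ) := by
  obtain rfl : Z = prefixMass pt := funext hZ
  have hsat : prefixMass pt (enc (phiP j φ) ++ [true]) ≠ 0 ↔
      ∃ a : List Bool, a.length = j ∧ satL a φ := by
    rw [prefixMass_enc_append_ne_zero_iff hpf hpt1 hpt0, hj']
    exact exists_satL_phiP_of_true_prefix_iff j φ
  have hpt_enc : pt (enc (phiP j φ)) = 0 := by
    simpa [hj'] using (pt_enc_append_ne_zero_iff hpf hpt1 hpt0 (phiP j φ) []).not
  have hne_zero : prefixMass pt (enc (phiP j φ)) ≠ 0 := by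
    simpa using (prefixMass_enc_append_ne_zero_iff hpf hpt1 hpt0 (phiP j φ) []).2
      ⟨_, List.nil_prefix, by simp [hj'], satL_replicate_false_phiP j φ⟩
  have hne_top := prefixMass_enc_ne_top hpf hpt1 hpt0 (phiP j φ)
  have hsplit := prefixMass_eq_add pt (enc (phiP j φ))
  rw [hpt_enc, zero_add] at hsplit
  have hfalse_ne_top : prefixMass pt (enc (phiP j φ) ++ [false]) ≠ ⊤ :=
    ne_top_of_le_ne_top hne_top (hsplit ▸ le_self_add)
  refine ⟨by simp [hsat, hne_top], ?_⟩
  rw [ENNReal.div_eq_one_iff hne_zero hne_top, hsplit, ← hsat, not_not, eq_comm]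
  simp [hfalse_ne_top]

/-- With the construction `φ' = (¬A_0 ∧ ⋯ ∧ ¬A_j) ∨ (A_0 ∧ Shift(φ))`
and the weighted language `p̃(enc(ψ)·a) = (1/3)^{|enc(ψ)·a|+1}` for `a` satisfying `ψ`
(`0` on all other strings), with local conditional probabilities
`p(c | x̂) = Z(x̂·c)/Z(x̂)`: `p(1 | enc(φ')) > 0` iff `φ` is satisfiable, and
`p(0 | enc(φ')) = 1` iff `φ` is unsatisfiable. -/
theorem stmt7 (enc : Fm → List Bool)
    (hpf : ∀ φ ψ : Fm, enc φ <+: enc ψ → φ = ψ)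
    (nv : Fm → ℕ) (hnv : ∀ ψ, onlyUses (nv ψ) ψ)
    (pt : List Bool → ℝ≥0∞)
    (hpt1 : ∀ (ψ : Fm) (a : List Bool), a.length = nv ψ → satL a ψ →
      pt (enc ψ ++ a) = (1 / 3 : ℝ≥0∞) ^ ((enc ψ ++ a).length + 1))
    (hpt0 : ∀ x : List Bool,
      (¬ ∃ (ψ : Fm) (a : List Bool), x = enc ψ ++ a ∧ a.length = nv ψ ∧ satL a ψ) →
      pt x = 0)
    (φ : Fm) (j : ℕ) (hj : nv φ = j) (hj' : nv (phiP j φ) = j + 1)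
    (Z : List Bool → ℝ≥0∞)
    (hZ : ∀ y : List Bool, Z y = ∑' x : {x : List Bool // y <+: x}, pt x.1) :
    (0 < Z (enc (phiP j φ) ++ [true]) / Z (enc (phiP j φ)) ↔
        ∃ a : List Bool, a.length = j ∧ satL a φ) ∧
    (Z (enc (phiP j φ) ++ [false]) / Z (enc (phiP j φ)) = 1 ↔
        ¬ ∃ a : List Bool, a.length = j ∧ satL a φ) :=
  stmt7_general enc hpf nv pt hpt1 hpt0 φ j hj' Z hZ
end

section
/- In the full-support construction with Z(x̂) = Z₁(x̂) + ε·Z₂(x̂), Z₂(enc(φ')·0) = Z₂(enc(φ')·1) < (1/7)·Z₁(enc(φ')·0), and Z₁(enc(φ')·1) = 2^{k−1}·#(φ)·Z₁(enc(φ')·0): if φ is unsatisfiable then p(0 | enc(φ')) > Z(enc(φ')·0) / ((1 + 2ε/7)·Z₁(enc(φ')·0)), while if φ is satisfiable then p(0 | enc(φ')) < Z(enc(φ')·0) / ((1 + 2^{k−1})·Z₁(enc(φ')·0)). Hence the former probability exceeds the latter by a factor of at least (1 + 2^{k−1})/(1 + 2ε/7). -/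
/-! Only the denominator `Z(x̂·0) + Z(x̂·1)` of `p(0 | x̂)` depends on `#(φ)`. With no satisfying
assignment `Z₁(x̂·1) = 0`, so the denominator is `Z₁(x̂·0) + 2ε·Z₂(x̂·0) < (1 + 2ε/7)·Z₁(x̂·0)`;
with one it already contains `Z₁(x̂·0) + 2^{k-1}·Z₁(x̂·0)`, plus the positive `ε`-terms. Dividing the
same numerator by these denominators gives the two bounds, and their ratio is a field identity. -/

lemma partitionSum_lt_of_unsat {eps Z10 Z11 Z20 Z21 : ℝ} (heps : 0 < eps) (hZ2021 : Z20 = Z21)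
    (hZ21 : Z21 < (1 / 7) * Z10) (hZ11 : Z11 = 0) :
    (Z10 + eps * Z20) + (Z11 + eps * Z21) < (1 + 2 * eps / 7) * Z10 := by
  subst hZ2021 hZ11
  nlinarith

lemma partitionSum_gt_of_sat {eps c Z10 Z11 Z20 Z21 : ℝ} {N : ℕ} (heps : 0 < eps)
    (hZ10 : 0 < Z10) (hZ20 : 0 < Z20) (hZ2021 : Z20 = Z21) (hc : 0 ≤ c) (hN : 1 ≤ N)
    (hZ11 : Z11 = c * N * Z10) :
    (1 + c) * Z10 < (Z10 + eps * Z20) + (Z11 + eps * Z21) := by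
  subst hZ2021 hZ11
  have hcZ : c * Z10 ≤ c * N * Z10 := by
    have : (1 : ℝ) ≤ N := by exact_mod_cast hN
    nlinarith [mul_nonneg hc hZ10.le]
  nlinarith [mul_pos heps hZ20]

theorem stmt13_general (eps : ℝ) (heps : 0 < eps) (k : ℕ) (N : ℕ)
    (Z10 Z11 Z20 Z21 : ℝ)
    (hZ10 : 0 < Z10) (hZ20 : 0 < Z20) (hZ2021 : Z20 = Z21)
    (hZ21 : Z21 < (1 / 7) * Z10)
    (hZ11 : Z11 = 2 ^ (k - 1) * (N : ℝ) * Z10) :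
    (N = 0 →
      (Z10 + eps * Z20) / ((Z10 + eps * Z20) + (Z11 + eps * Z21))
        > (Z10 + eps * Z20) / ((1 + 2 * eps / 7) * Z10)) ∧
    (1 ≤ N →
      (Z10 + eps * Z20) / ((Z10 + eps * Z20) + (Z11 + eps * Z21))
        < (Z10 + eps * Z20) / ((1 + 2 ^ (k - 1)) * Z10)) ∧
    (Z10 + eps * Z20) / ((1 + 2 * eps / 7) * Z10)
      ≥ ((1 + 2 ^ (k - 1)) / (1 + 2 * eps / 7))
          * ((Z10 + eps * Z20) / ((1 + 2 ^ (k - 1)) * Z10)) := by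
  have hnum : 0 < Z10 + eps * Z20 := by positivity
  refine ⟨fun hN => ?unsat, fun hN => ?sat, ?ratio⟩
  case unsat =>
    have hZ11_zero : Z11 = 0 := by simp [hZ11, hN]
    exact div_lt_div_of_pos_left hnum (by rw [hZ11_zero, ← hZ2021]; positivity)
      (partitionSum_lt_of_unsat heps hZ2021 hZ21 hZ11_zero)
  case sat =>
    exact div_lt_div_of_pos_left hnum (by positivity)
      (partitionSum_gt_of_sat heps hZ10 hZ20 hZ2021 (by positivity) hN hZ11)
  case ratio =>
    have hpow : (0 : ℝ) < 1 + 2 ^ (k - 1) := by positivity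
    have heps7 : (0 : ℝ) < 1 + 2 * eps / 7 := by positivity
    field_simp
    rfl

/-- In the full-support construction, with `Z(x̂) = Z₁(x̂) + ε·Z₂(x̂)`,
`Z₂(enc(φ')·0) = Z₂(enc(φ')·1) < (1/7)·Z₁(enc(φ')·0)` and
`Z₁(enc(φ')·1) = 2^{k−1}·#(φ)·Z₁(enc(φ')·0)`: if `φ` is unsatisfiable (`#(φ) = 0`) then
`p(0 | enc(φ')) > Z(enc(φ')·0) / ((1 + 2ε/7)·Z₁(enc(φ')·0))`, while if `φ` is satisfiable
(`#(φ) ≥ 1`) then `p(0 | enc(φ')) < Z(enc(φ')·0) / ((1 + 2^{k−1})·Z₁(enc(φ')·0))`; and the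
former bound exceeds the latter by the factor `(1 + 2^{k−1})/(1 + 2ε/7)`. -/
theorem stmt13 (eps : ℝ) (heps : 0 < eps) (k : ℕ) (hk : 1 ≤ k) (N : ℕ)
    (Z10 Z11 Z20 Z21 : ℝ)
    (hZ10 : 0 < Z10) (hZ20 : 0 < Z20) (hZ2021 : Z20 = Z21)
    (hZ21 : Z21 < (1 / 7) * Z10)
    (hZ11 : Z11 = 2 ^ (k - 1) * (N : ℝ) * Z10) :
    (N = 0 →
      (Z10 + eps * Z20) / ((Z10 + eps * Z20) + (Z11 + eps * Z21))
        > (Z10 + eps * Z20) / ((1 + 2 * eps / 7) * Z10)) ∧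
    (1 ≤ N →
      (Z10 + eps * Z20) / ((Z10 + eps * Z20) + (Z11 + eps * Z21))
        < (Z10 + eps * Z20) / ((1 + 2 ^ (k - 1)) * Z10)) ∧
    (Z10 + eps * Z20) / ((1 + 2 * eps / 7) * Z10)
      ≥ ((1 + 2 ^ (k - 1)) / (1 + 2 * eps / 7))
          * ((Z10 + eps * Z20) / ((1 + 2 ^ (k - 1)) * Z10)) :=
  stmt13_general eps heps k N Z10 Z11 Z20 Z21 hZ10 hZ20 hZ2021 hZ21 hZ11
end

section
/- For residual energy-based models q'_θ(x) ∝ q'₀(x)·exp g_θ(x) and q''_θ(x) ∝ q''₀(x)·exp g_θ(x) over a finite support, the KL-divergence difference satisfies KL[p‖q'_θ] − KL[p‖q''_θ] = KL[p‖q'₀] − KL[p‖q''₀] + log(Z'/Z''), where Z' = E_{x∼q'₀}[exp g_θ(x)] and Z'' = E_{x∼q''₀}[exp g_θ(x)]. Consequently, if Z'/Z'' > exp(−c) and KL[p‖q'₀] − KL[p‖q''₀] > c for some c > 0, then KL[p‖q'_θ] > KL[p‖q''_θ]. -/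
/-!
Tilting a model `q` by `exp g` and renormalising by `Z` changes `KL[p‖q]` by exactly
`-E_p[g] + log Z`, as long as `q` is positive on the support of `p`. The term `-E_p[g]` does not depend on the base model, so it cancels in
the difference of two such divergences and only `log (Z' / Z'')` survives; the inequality then
follows from `log (Z' / Z'') > -c`.
-/

noncomputable def KL {S : Type*} [Fintype S] (p q : S → ℝ) : ℝ :=
  ∑ x, p x * Real.log (p x / q x)

section Tilting

variable {S : Type*} [Fintype S]

lemma KL_tilt (p q g : S → ℝ) (hp : ∀ x, 0 ≤ p x) (hsupp : ∀ x, 0 < p x → 0 < q x)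
    {Z : ℝ} (hZ : 0 < Z) :
    KL p (fun x => q x * Real.exp (g x) / Z)
      = KL p q - ∑ x, p x * g x + (∑ x, p x) * Real.log Z := by
  unfold KL
  rw [← Finset.sum_sub_distrib, Finset.sum_mul, ← Finset.sum_add_distrib]
  refine Finset.sum_congr rfl fun x _ => ?_
  rcases (hp x).eq_or_lt with hpx | hpx
  · simp [← hpx]
  · have hqx := hsupp x hpx
    rw [Real.log_div hpx.ne' (by positivity), Real.log_div (by positivity) hZ.ne',
      Real.log_mul hqx.ne' (Real.exp_pos _).ne', Real.log_exp, Real.log_div hpx.ne' hqx.ne']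
    ring

lemma exists_pos_of_sum_eq_one {p : S → ℝ} (hps : ∑ x, p x = 1) : ∃ x, 0 < p x := by
  obtain ⟨x, -, hx⟩ := Finset.exists_lt_of_sum_lt (f := fun _ => (0 : ℝ)) (g := p)
    (s := Finset.univ) (by simp [hps])
  exact ⟨x, hx⟩

lemma sum_mul_exp_pos {q : S → ℝ} (g : S → ℝ) (hq : ∀ x, 0 ≤ q x) {x₀ : S} (hx₀ : 0 < q x₀) :
    0 < ∑ x, q x * Real.exp (g x) :=
  Finset.sum_pos' (fun x _ => mul_nonneg (hq x) (Real.exp_pos _).le)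
    ⟨x₀, Finset.mem_univ _, mul_pos hx₀ (Real.exp_pos _)⟩

lemma KL_tilt_sub_KL_tilt (p q' q'' g : S → ℝ) (hp : ∀ x, 0 ≤ p x) (hps : ∑ x, p x = 1)
    (hsupp' : ∀ x, 0 < p x → 0 < q' x) (hsupp'' : ∀ x, 0 < p x → 0 < q'' x)
    {Z' Z'' : ℝ} (hZ' : 0 < Z') (hZ'' : 0 < Z'') :
    KL p (fun x => q' x * Real.exp (g x) / Z') - KL p (fun x => q'' x * Real.exp (g x) / Z'')
      = KL p q' - KL p q'' + Real.log (Z' / Z'') := by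
  rw [KL_tilt p q' g hp hsupp' hZ', KL_tilt p q'' g hp hsupp'' hZ'', hps,
    Real.log_div hZ'.ne' hZ''.ne']
  ring

end Tilting

theorem stmt19_general {S : Type*} [Fintype S] (p q0' q0'' g : S → ℝ)
    (hp : ∀ x, 0 ≤ p x) (hps : ∑ x, p x = 1)
    (hq' : ∀ x, 0 ≤ q0' x)
    (hq'' : ∀ x, 0 ≤ q0'' x)
    (hsupp' : ∀ x, 0 < p x → 0 < q0' x)
    (hsupp'' : ∀ x, 0 < p x → 0 < q0'' x)
    (Z' Z'' : ℝ)
    (hZ' : Z' = ∑ x, q0' x * Real.exp (g x))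
    (hZ'' : Z'' = ∑ x, q0'' x * Real.exp (g x)) :
    KL p (fun x => q0' x * Real.exp (g x) / Z')
        - KL p (fun x => q0'' x * Real.exp (g x) / Z'')
      = KL p q0' - KL p q0'' + Real.log (Z' / Z'') ∧
    ∀ c : ℝ, 0 < c → Z' / Z'' > Real.exp (-c) → KL p q0' - KL p q0'' > c →
      KL p (fun x => q0' x * Real.exp (g x) / Z')
        > KL p (fun x => q0'' x * Real.exp (g x) / Z'') := by
  obtain ⟨x₀, hx₀⟩ := exists_pos_of_sum_eq_one hps
  have hZ'pos : 0 < Z' := hZ' ▸ sum_mul_exp_pos g hq' (hsupp' x₀ hx₀)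
  have hZ''pos : 0 < Z'' := hZ'' ▸ sum_mul_exp_pos g hq'' (hsupp'' x₀ hx₀)
  have hdiff := KL_tilt_sub_KL_tilt p q0' q0'' g hp hps hsupp' hsupp'' hZ'pos hZ''pos
  refine ⟨hdiff, fun c _ hZ hKL => ?_⟩
  have hlog : -c < Real.log (Z' / Z'') := (Real.lt_log_iff_exp_lt (by positivity)).2 hZ
  linarith

/-- For residual energy-based models
`q'_θ(x) ∝ q'₀(x)·exp g_θ(x)` and `q''_θ(x) ∝ q''₀(x)·exp g_θ(x)` over a finite support,
`KL[p‖q'_θ] − KL[p‖q''_θ] = KL[p‖q'₀] − KL[p‖q''₀] + log(Z'/Z'')` where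
`Z' = E_{x∼q'₀}[exp g_θ(x)]` and `Z'' = E_{x∼q''₀}[exp g_θ(x)]`.  Consequently, if
`Z'/Z'' > exp(−c)` and `KL[p‖q'₀] − KL[p‖q''₀] > c` for some `c > 0`, then
`KL[p‖q'_θ] > KL[p‖q''_θ]`. -/
theorem stmt19 {S : Type*} [Fintype S] (p q0' q0'' g : S → ℝ)
    (hp : ∀ x, 0 ≤ p x) (hps : ∑ x, p x = 1)
    (hq' : ∀ x, 0 ≤ q0' x) (hq's : ∑ x, q0' x = 1)
    (hq'' : ∀ x, 0 ≤ q0'' x) (hq''s : ∑ x, q0'' x = 1)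
    (hsupp' : ∀ x, 0 < p x → 0 < q0' x)
    (hsupp'' : ∀ x, 0 < p x → 0 < q0'' x)
    (Z' Z'' : ℝ)
    (hZ' : Z' = ∑ x, q0' x * Real.exp (g x))
    (hZ'' : Z'' = ∑ x, q0'' x * Real.exp (g x)) :
    KL p (fun x => q0' x * Real.exp (g x) / Z')
        - KL p (fun x => q0'' x * Real.exp (g x) / Z'')
      = KL p q0' - KL p q0'' + Real.log (Z' / Z'') ∧
    ∀ c : ℝ, 0 < c → Z' / Z'' > Real.exp (-c) → KL p q0' - KL p q0'' > c →
      KL p (fun x => q0' x * Real.exp (g x) / Z')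
        > KL p (fun x => q0'' x * Real.exp (g x) / Z'') :=
  stmt19_general p q0' q0'' g hp hps hq' hq'' hsupp' hsupp'' Z' Z'' hZ' hZ''
end
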